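/- arXiv:2410.03387 — 3 statements merged into one kernel-verified Lean document; each statement's English description precedes it below -/
import Mathlib

section
/- The median rule with fixed phantoms is strategy-proof with respect to single-peaked preferences: for any profile of single-peaked preferences over ℝ with peaks p_1,...,p_a, any agent i, and any misreport p'_i, agent i weakly prefers med(p_1,...,p_a,γ) to med(p_1,...,p'_i,...,p_a,γ). -/
/-!
If a misreport moves the median from `m` down to `m' < m`, agent `i`'s true peak is at least `m`:
otherwise the `a + 1` entries `≥ m` of the truthful profile all survive the misreport (only `i`'s
entry, which lies below `m`, changes), and together with the `a + 1` entries `≤ m'` of the new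
profile they would exceed the `2a + 1` entries in total. Symmetrically for an upward move. So a
misreport can only push the outcome further away from the peak, which single-peakedness makes
worse.
-/

def IsMedian (l : List ℝ) (m : ℝ) : Prop :=
  m ∈ l ∧ (l.length + 1) / 2 ≤ l.countP (fun b => decide (b ≤ m)) ∧
    (l.length + 1) / 2 ≤ l.countP (fun b => decide (m ≤ b))

namespace List

theorem countP_add_countP_le_length {α : Type*} {q r : α → Bool} {l : List α}
    (hqr : ∀ b ∈ l, q b → r b = false) : l.countP q + l.countP r ≤ l.length := by
  have hr : l.countP r ≤ l.countP (fun b => decide ¬q b) :=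
    countP_mono_left fun b hb hrb => by
      simpa using fun hqb => Bool.false_ne_true ((hqr b hb hqb).symm.trans hrb)
  have := length_eq_countP_add_countP q (l := l)
  omega

theorem countP_ofFn_le_countP_ofFn_update {α : Type*} {n : ℕ} {q : α → Bool} (f : Fin n → α)
    (i : Fin n) (x : α) (hq : q (f i) = false) :
    (ofFn f).countP q ≤ (ofFn (Function.update f i x)).countP q := by
  simp only [ofFn_eq_map, countP_map]
  refine countP_mono_left fun j _ hj => ?_
  have hji : j ≠ i := by rintro rfl; simp_all
  simpa [Function.update_of_ne hji] using hj

end List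

open List

section Majority

variable {α : Type*} {a : ℕ} (p : Fin a → α) (γ : Fin (a + 1) → α) (i : Fin a) (x : α)

theorem length_ofFn_append_ofFn_succ :
    ((ofFn p ++ ofFn γ).length + 1) / 2 = a + 1 := by
  simp only [length_append, length_ofFn]
  omega

theorem apply_eq_true_of_majority_of_majority_update {q r : α → Bool}
    (hqr : ∀ b, q b → r b = false)
    (hq : a + 1 ≤ (ofFn p ++ ofFn γ).countP q)
    (hr : a + 1 ≤ (ofFn (Function.update p i x) ++ ofFn γ).countP r) :
    q (p i) = true := by
  by_contra hpi
  have hmono := countP_ofFn_le_countP_ofFn_update p i x (eq_false_of_ne_true hpi)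
  have hdisj := countP_add_countP_le_length (l := ofFn (Function.update p i x) ++ ofFn γ)
    fun b _ => hqr b
  simp only [countP_append, length_append, length_ofFn] at hq hr hmono hdisj
  omega

end Majority

section MedianRule

variable {a : ℕ} {p : Fin a → ℝ} {γ : Fin (a + 1) → ℝ} {i : Fin a} {x m m' : ℝ}

theorem IsMedian.le_apply_of_lt_of_update (hm : IsMedian (ofFn p ++ ofFn γ) m)
    (hm' : IsMedian (ofFn (Function.update p i x) ++ ofFn γ) m') (h : m' < m) : m ≤ p i := by
  have := apply_eq_true_of_majority_of_majority_update p γ i x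
    (q := fun b => decide (m ≤ b)) (r := fun b => decide (b ≤ m'))
    (fun b hb => by simp only [decide_eq_true_eq, decide_eq_false_iff_not, not_le] at hb ⊢; linarith)
    ((length_ofFn_append_ofFn_succ p γ).symm.trans_le hm.2.2)
    ((length_ofFn_append_ofFn_succ _ γ).symm.trans_le hm'.2.1)
  simpa using this

theorem IsMedian.apply_le_of_lt_of_update (hm : IsMedian (ofFn p ++ ofFn γ) m)
    (hm' : IsMedian (ofFn (Function.update p i x) ++ ofFn γ) m') (h : m < m') : p i ≤ m := by
  have := apply_eq_true_of_majority_of_majority_update p γ i x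
    (q := fun b => decide (b ≤ m)) (r := fun b => decide (m' ≤ b))
    (fun b hb => by simp only [decide_eq_true_eq, decide_eq_false_iff_not, not_le] at hb ⊢; linarith)
    ((length_ofFn_append_ofFn_succ p γ).symm.trans_le hm.2.1)
    ((length_ofFn_append_ofFn_succ _ γ).symm.trans_le hm'.2.2)
  simpa using this

end MedianRule

/-- The median rule with fixed phantoms is strategy-proof for single-peaked
preferences: agent `i` weakly prefers the truthful outcome `m` to the outcome
`m'` obtained by any misreport `p'`. -/
theorem stmt3 (a : ℕ) (p : Fin a → ℝ) (γ : Fin (a + 1) → ℝ)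
    (P : Fin a → ℝ → ℝ → Prop)
    (hsp : ∀ (i : Fin a) (x y : ℝ),
      ((x ≤ p i ∧ y < x) ∨ (p i ≤ x ∧ x < y)) → P i x y)
    (i : Fin a) (p' : ℝ) (m m' : ℝ)
    (hm : IsMedian (List.ofFn p ++ List.ofFn γ) m)
    (hm' : IsMedian (List.ofFn (Function.update p i p') ++ List.ofFn γ) m') :
    m' = m ∨ P i m m' := by
  rcases lt_trichotomy m' m with h | h | h
  · exact Or.inr (hsp i m m' (Or.inl ⟨hm.le_apply_of_lt_of_update hm' h, h⟩))
  · exact Or.inl h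
  · exact Or.inr (hsp i m m' (Or.inr ⟨hm.apply_le_of_lt_of_update hm' h, h⟩))
end

section
/- Every strategy-proof and anonymous rule on two alternatives {x,y} with n agents holding strict preferences is a quota majority method: there exists k ∈ {0,1,...,n+1} such that the rule selects x exactly when at least k agents prefer x to y. -/
/-!
Anonymity makes the outcome a function of the number of agents preferring `x`, and
strategy-proofness makes that function monotone: an agent switching from `y` to `x` cannot
move the outcome from `x` to `y`. A monotone `Bool`-valued function on `{0, …, n}` is a
threshold, and the threshold is the quota.
-/

open Finset Function

theorem Nat.exists_threshold_of_step {n : ℕ} (p : ℕ → Prop) (hp : ∀ m < n, p m → p (m + 1)) :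
    ∃ k ≤ n + 1, ∀ m ≤ n, p m ↔ k ≤ m := by
  classical
  have hq : ∃ k, p k ∨ n < k := ⟨n + 1, .inr n.lt_succ_self⟩
  refine ⟨Nat.find hq, Nat.find_min' hq (.inr n.lt_succ_self), fun m hm =>
    ⟨fun h => Nat.find_min' hq (.inl h), fun hkm => ?_⟩⟩
  have hpk : p (Nat.find hq) := (Nat.find_spec hq).resolve_right (by omega)
  induction m, hkm using Nat.le_induction with
  | base => exact hpk
  | succ m hkm ih => exact hp m (by omega) (ih (by omega))

section Profiles

variable {ι : Type*} [Fintype ι]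

theorem exists_perm_comp_eq_of_card_eq {v w : ι → Bool}
    (h : #{i | v i = true} = #{i | w i = true}) : ∃ σ : Equiv.Perm ι, v ∘ σ = w := by
  have hcard : Fintype.card {i // w i = true} = Fintype.card {i // v i = true} := by
    simp only [Fintype.card_subtype, h]
  refine ⟨(Fintype.equivOfCardEq hcard).extendSubtype, funext fun i => ?_⟩
  by_cases hw : w i = true
  · simpa [hw] using (Fintype.equivOfCardEq hcard).extendSubtype_mem i hw
  · simpa [hw] using (Fintype.equivOfCardEq hcard).extendSubtype_not_mem i hw

theorem card_filter_update_true [DecidableEq ι] {v : ι → Bool} {i : ι} (hi : v i = false) :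
    #{j | update v i true j = true} = #{j | v j = true} + 1 := by
  have : univ.filter (fun j => update v i true j = true) =
      insert i ({j | v j = true} : Finset ι) := by
    ext j
    by_cases hj : j = i <;> simp [hj, update_of_ne]
  rw [this, card_insert_of_notMem (by simp [hi])]

theorem exists_eq_false_of_card_lt {v : ι → Bool} (h : #{i | v i = true} < Fintype.card ι) :
    ∃ i, v i = false := by
  by_contra! hv
  simp_all

end Profiles

variable {ι : Type*}

def IsAnonymous (f : (ι → Bool) → Bool) : Prop :=
  ∀ (v : ι → Bool) (σ : Equiv.Perm ι), f (v ∘ σ) = f v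

theorem IsAnonymous.apply_eq_of_card_eq [Fintype ι] {f : (ι → Bool) → Bool}
    (hf : IsAnonymous f) {v w : ι → Bool} (h : #{i | v i = true} = #{i | w i = true}) :
    f v = f w := by
  obtain ⟨σ, rfl⟩ := exists_perm_comp_eq_of_card_eq h
  exact (hf v σ).symm

variable [DecidableEq ι]

def IsStrategyProof (f : (ι → Bool) → Bool) : Prop :=
  ∀ (v : ι → Bool) (i : ι), f (update v i (!(v i))) = v i → f v = v i

theorem IsStrategyProof.apply_update_true {f : (ι → Bool) → Bool}
    (hf : IsStrategyProof f) {v : ι → Bool} {i : ι} (hv : f v = true) (hi : v i = false) :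
    f (update v i true) = true := by
  by_contra h
  have := hf v i
  simp_all

theorem IsStrategyProof.exists_quota [Fintype ι] {f : (ι → Bool) → Bool}
    (hsp : IsStrategyProof f) (hanon : IsAnonymous f) :
    ∃ k ≤ Fintype.card ι + 1, ∀ v : ι → Bool, f v = true ↔ k ≤ #{i | v i = true} := by
  let accepts (m : ℕ) : Prop := ∃ v : ι → Bool, #{i | v i = true} = m ∧ f v = true
  have step : ∀ m < Fintype.card ι, accepts m → accepts (m + 1) := by
    rintro m hm ⟨v, rfl, hv⟩
    obtain ⟨i, hi⟩ := exists_eq_false_of_card_lt hm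
    exact ⟨update v i true, card_filter_update_true hi, hsp.apply_update_true hv hi⟩
  obtain ⟨k, hk, hquota⟩ := Nat.exists_threshold_of_step accepts step
  refine ⟨k, hk, fun v => ?_⟩
  rw [← hquota _ (card_le_univ _)]
  refine ⟨fun hv => ⟨v, rfl, hv⟩, ?_⟩
  rintro ⟨w, hw, hfw⟩
  rwa [hanon.apply_eq_of_card_eq hw.symm]

/-- Every strategy-proof and anonymous rule on two alternatives is a quota
majority method: there is `k ∈ {0,…,n+1}` such that `x` (encoded `true`) is
chosen exactly when at least `k` agents prefer `x` to `y`. -/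
theorem stmt7 (n : ℕ) (f : (Fin n → Bool) → Bool)
    (hsp : ∀ (v : Fin n → Bool) (i : Fin n),
      f (Function.update v i (!(v i))) = v i → f v = v i)
    (hanon : ∀ (v : Fin n → Bool) (σ : Equiv.Perm (Fin n)), f (v ∘ σ) = f v) :
    ∃ k ≤ n + 1, ∀ v : Fin n → Bool,
      f v = true ↔ k ≤ (Finset.univ.filter fun i => v i = true).card := by
  simpa using IsStrategyProof.exists_quota (f := f) hsp hanon
end

section
/- Every rule on {x,y} over agents partitioned into A and D that is strategy-proof and type-anonymous is a double-quota majority method: there exists a finite antichain Q ⊆ ℕ² of double-quotas such that the rule selects x at a profile iff (|supporters of x in A|, |supporters of x in D|) componentwise dominates some element of Q. -/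
def countT {n : ℕ} (v : Fin n → Bool) : ℕ :=
  (Finset.univ.filter fun i => v i = true).card

/-!
Strategy-proofness for two alternatives is exactly monotonicity: a voter who switches to `x`
never turns an outcome `x` into `y`, since otherwise she would gain by switching back. Together
with type-anonymity this makes the rule monotone in the pair of support counts, so the set of
count pairs at which `x` wins is an upper set; the double-quotas are its minimal elements.
-/

open Function Finset

theorem le_update_true_of_strategyProof {ι : Type*} [DecidableEq ι] {φ : (ι → Bool) → Bool}
    (hsp : ∀ v i, φ (update v i (!v i)) = v i → φ v = v i) (v : ι → Bool) (i : ι) :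
    φ v ≤ φ (update v i true) := by
  rw [Bool.le_iff_imp]
  intro hv
  by_cases hvi : v i = true
  · rwa [update_eq_self_iff.2 hvi.symm]
  · -- otherwise voter `i` would obtain `x` at `update v i true` by reporting `y`
    have := hsp (update v i true) i
    simp only [update_self, update_idem, Bool.not_true] at this
    rw [update_eq_self_iff.2 (Bool.not_eq_true _ ▸ hvi).symm] at this
    exact this hv

theorem monotone_of_le_update_true {ι β : Type*} [Fintype ι] [DecidableEq ι] [Preorder β]
    {φ : (ι → Bool) → β} (h : ∀ v i, φ v ≤ φ (update v i true)) : Monotone φ := by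
  intro w v hwv
  have hraise : ∀ s : Finset ι, φ w ≤ φ fun i => w i || decide (i ∈ s) := by
    intro s
    induction s using Finset.induction_on with
    | empty => simp
    | insert a s _ ih =>
      refine ih.trans (le_of_le_of_eq (h _ a) (congrArg φ ?_))
      funext i
      by_cases hia : i = a <;> simp [hia]
  convert hraise (univ.filter fun i => v i = true) using 2
  funext i
  have := hwv i
  simp only [mem_filter, mem_univ, true_and]
  revert this
  cases v i <;> cases w i <;> simp [Bool.le_iff_imp]

theorem exists_perm_comp_le_of_countT_le {n : ℕ} {w v : Fin n → Bool}
    (h : countT w ≤ countT v) : ∃ σ : Equiv.Perm (Fin n), w ∘ σ ≤ v := by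
  obtain ⟨s, hsv, hs⟩ := exists_subset_card_eq h
  obtain ⟨σ, hσ⟩ := Equiv.Perm.exists_map_finset_eq _ s hs.symm
  refine ⟨σ.symm, fun i => Bool.le_iff_imp.2 fun hwi => ?_⟩
  have : σ (σ.symm i) ∈ s := hσ ▸ mem_map_of_mem _ (by simpa using hwi)
  simpa using hsv (by simpa using this)

theorem le_of_countT_le {n : ℕ} {β : Type*} [Preorder β] {φ : (Fin n → Bool) → β}
    (hmono : Monotone φ) (hperm : ∀ v (σ : Equiv.Perm (Fin n)), φ (v ∘ σ) = φ v)
    {w v : Fin n → Bool} (h : countT w ≤ countT v) : φ w ≤ φ v := by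
  obtain ⟨σ, hσ⟩ := exists_perm_comp_le_of_countT_le h
  exact hperm w σ ▸ hmono hσ

theorem Finset.exists_isAntichain_exists_le_iff {α : Type*} [PartialOrder α] (S : Finset α) :
    ∃ Q : Finset α, IsAntichain (· ≤ ·) (Q : Set α) ∧
      ∀ p, (∃ q ∈ Q, q ≤ p) ↔ ∃ q ∈ S, q ≤ p := by
  classical
  refine ⟨S.filter (Minimal (· ∈ S)),
    (setOfPred_minimal_antichain (· ∈ S)).subset fun q hq => (mem_filter.1 hq).2,
    fun p => ⟨?_, ?_⟩⟩
  · rintro ⟨q, hq, hqp⟩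
    exact ⟨q, (mem_filter.1 hq).1, hqp⟩
  · rintro ⟨q, hq, hqp⟩
    obtain ⟨m, hmq, hm⟩ := S.finite_toSet.isPWO.exists_le_minimal (mem_coe.2 hq)
    exact ⟨m, mem_filter.2 ⟨hm.prop, by simpa using hm⟩, hmq.trans hqp⟩

/-- Every strategy-proof and type-anonymous rule on `{x, y}` (output `true`
means `x`) over agents partitioned into `A` and `D` is a double-quota majority
method: for some finite antichain `Q ⊆ ℕ²`, the rule selects `x` iff the pair
of support counts componentwise dominates some element of `Q`. -/
theorem stmt17 (nA nD : ℕ) (f : (Fin nA → Bool) → (Fin nD → Bool) → Bool)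
    (hspA : ∀ (vA : Fin nA → Bool) (vD : Fin nD → Bool) (i : Fin nA),
      f (Function.update vA i (!(vA i))) vD = vA i → f vA vD = vA i)
    (hspD : ∀ (vA : Fin nA → Bool) (vD : Fin nD → Bool) (j : Fin nD),
      f vA (Function.update vD j (!(vD j))) = vD j → f vA vD = vD j)
    (hanon : ∀ (vA : Fin nA → Bool) (vD : Fin nD → Bool)
      (σA : Equiv.Perm (Fin nA)) (σD : Equiv.Perm (Fin nD)),
      f (vA ∘ σA) (vD ∘ σD) = f vA vD) :
    ∃ Q : Finset (ℕ × ℕ),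
      (∀ q ∈ Q, ∀ q' ∈ Q, q.1 ≤ q'.1 → q.2 ≤ q'.2 → q = q') ∧
      ∀ vA vD, f vA vD = true ↔ ∃ q ∈ Q, q.1 ≤ countT vA ∧ q.2 ≤ countT vD := by
  have hmonoA : ∀ vD, Monotone (f · vD) := fun vD =>
    monotone_of_le_update_true (le_update_true_of_strategyProof fun vA i => hspA vA vD i)
  have hmonoD : ∀ vA, Monotone (f vA) := fun vA =>
    monotone_of_le_update_true (le_update_true_of_strategyProof fun vD j => hspD vA vD j)
  have hmono_count : ∀ {wA vA wD vD}, countT wA ≤ countT vA → countT wD ≤ countT vD →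
      f wA wD ≤ f vA vD := fun hA hD =>
    (le_of_countT_le (hmonoA _) (fun v σ => by simpa using hanon v _ σ 1) hA).trans
      (le_of_countT_le (hmonoD _) (fun v σ => by simpa using hanon _ v 1 σ) hD)
  let S := (univ.filter fun v : (Fin nA → Bool) × (Fin nD → Bool) => f v.1 v.2 = true).image
    fun v => (countT v.1, countT v.2)
  obtain ⟨Q, hQ, hQS⟩ := S.exists_isAntichain_exists_le_iff
  refine ⟨Q, fun q hq q' hq' h1 h2 => hQ.eq hq hq' (Prod.le_def.2 ⟨h1, h2⟩), fun vA vD => ?_⟩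
  simp only [← Prod.le_def (y := (countT vA, countT vD)), hQS]
  constructor
  · intro hf
    exact ⟨_, mem_image_of_mem _ (mem_filter.2 ⟨mem_univ (vA, vD), hf⟩), le_rfl⟩
  · rintro ⟨_, hq, hle⟩
    obtain ⟨⟨wA, wD⟩, hw, rfl⟩ := mem_image.1 hq
    exact Bool.le_iff_imp.1 (hmono_count hle.1 hle.2) (mem_filter.1 hw).2
end
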